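/- arXiv:2605.30179 — 3 statements merged into one kernel-verified Lean document; each statement's English description precedes it below -/
import Mathlib

section
/- For u ∈ ℝ and δ > 0, the function f(m) = (1/2)(log(δ²/m) + (m + (m−u)²)/δ² − 1) on (0,∞) attains its unique global minimum at m* = (2u − 1 + √((2u−1)² + 8δ²))/4, and m* > 0. -/
/-! The minimiser `m*` is the positive root of `2m² + (1 - 2u)m = δ²`, the stationarity equation of
`f`. Using this relation, `f m - f m* = ((m/m* - 1 - log (m/m*)) + (m - m*)²/δ²) / 2`: the first term
is nonnegative since `log x ≤ x - 1`, and the second is positive unless `m = m*`. -/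

open Real

lemma add_sqrt_sq_add_pos (c : ℝ) {a : ℝ} (ha : 0 < a) : 0 < c + √(c ^ 2 + a) := by
  have habs : |c| < √(c ^ 2 + a) := by
    rw [← sqrt_sq_eq_abs]
    exact sqrt_lt_sqrt (sq_nonneg c) (lt_add_of_pos_right _ ha)
  linarith [neg_abs_le c]

lemma quadratic_root_eq (c a : ℝ) (h : 0 ≤ c ^ 2 + 8 * a) :
    2 * ((c + √(c ^ 2 + 8 * a)) / 4) ^ 2 - c * ((c + √(c ^ 2 + 8 * a)) / 4) = a := by
  linear_combination sq_sqrt h / 8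

noncomputable def klProxy (u δ m : ℝ) : ℝ :=
  (1 / 2) * (log (δ ^ 2 / m) + (m + (m - u) ^ 2) / δ ^ 2 - 1)

lemma klProxy_sub_klProxy {u δ m n : ℝ} (hδ : δ ≠ 0) (hm : 0 < m) (hn : 0 < n)
    (hcrit : 2 * n ^ 2 + (1 - 2 * u) * n = δ ^ 2) :
    klProxy u δ m - klProxy u δ n = ((m / n - 1 - log (m / n)) + (m - n) ^ 2 / δ ^ 2) / 2 := by
  have hδ2 : δ ^ 2 ≠ 0 := pow_ne_zero 2 hδ
  have hquad : (m + (m - u) ^ 2) / δ ^ 2 - (n + (n - u) ^ 2) / δ ^ 2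
      = (m / n - 1) + (m - n) ^ 2 / δ ^ 2 := by
    field_simp
    linear_combination (m - n) * hcrit
  simp only [klProxy]
  rw [log_div hδ2 hm.ne', log_div hδ2 hn.ne', log_div hm.ne' hn.ne']
  linear_combination hquad / 2

lemma klProxy_lt_klProxy {u δ m n : ℝ} (hδ : δ ≠ 0) (hm : 0 < m) (hn : 0 < n) (hmn : m ≠ n)
    (hcrit : 2 * n ^ 2 + (1 - 2 * u) * n = δ ^ 2) : klProxy u δ n < klProxy u δ m := by
  have hlog : log (m / n) ≤ m / n - 1 := log_le_sub_one_of_pos (div_pos hm hn)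
  have hsq : 0 < (m - n) ^ 2 / δ ^ 2 := by
    have := sub_ne_zero.mpr hmn
    positivity
  linarith [klProxy_sub_klProxy hδ hm hn hcrit]

/-- `f(m) = (1/2)(log(δ²/m) + (m + (m−u)²)/δ² − 1)` on `(0,∞)` attains its unique
global minimum at `m* = (2u−1+√((2u−1)²+8δ²))/4`, and `m* > 0`. -/
theorem kl_proxy_unique_min (u δ : ℝ) (hδ : 0 < δ) :
    let f : ℝ → ℝ := fun m => (1/2) * (Real.log (δ^2 / m) + (m + (m - u)^2) / δ^2 - 1)
    let mstar := (2*u - 1 + Real.sqrt ((2*u - 1)^2 + 8*δ^2)) / 4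
    0 < mstar ∧ ∀ m ∈ Set.Ioi (0:ℝ), m ≠ mstar → f mstar < f m := by
  intro f mstar
  have hpos : 0 < mstar := by
    have := add_sqrt_sq_add_pos (2 * u - 1) (by positivity : 0 < 8 * δ ^ 2)
    positivity
  have hcrit : 2 * mstar ^ 2 + (1 - 2 * u) * mstar = δ ^ 2 := by
    linear_combination quadratic_root_eq (2 * u - 1) (δ ^ 2) (by positivity)
  exact ⟨hpos, fun m hm hne => klProxy_lt_klProxy hδ.ne' hm hpos hne hcrit⟩
end

section
/- Let σ be a Rayleigh random variable with scale parameter related to b > 0 (density proportional to σ·exp(−σ²/(2b²)) suitably scaled), and conditional on σ let X ~ N(0, σ²). Then the marginal density of X is (1/(2b)) exp(−|x|/b), i.e., X ~ Laplace(0, b). Formally: for all x ∈ ℝ, ∫₀^∞ (1/√(2πσ²)) e^{−x²/(2σ²)} · (σ/b²) e^{−σ²/(2b²)} dσ = (1/(2b)) e^{−|x|/b}. -/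
/-!
Given σ, the density of `X` at `x` is `e^{-x²/(2σ²)} / √(2πσ²)`, so the mixture equals
`(√(2π) b²)⁻¹ ∫₀^∞ e^{-σ²/(2b²) - x²/(2σ²)} dσ`, an instance of
`∫₀^∞ e^{-q t² - p/t²} dt = ½ √(π/q) e^{-2√(pq)}`. After rescaling and completing the square this
reduces to Glasser's identity `∫₀^∞ e^{-(t - k/t)²} dt = √π/2` for `k > 0`: since `t ↦ t - k/t`
maps `(0, ∞)` bijectively onto `ℝ`, the Gaussian integral gives
`∫₀^∞ (1 + k/t²) e^{-(t - k/t)²} dt = √π`, and the inversion `t ↦ k/t`, which preserves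
`e^{-(t - k/t)²}`, shows that the two summands contribute equally.
-/

open Real MeasureTheory Set

section Inversion

variable {E : Type*} [NormedAddCommGroup E] [NormedSpace ℝ E]

theorem integral_comp_const_div_Ioi (g : ℝ → E) {k : ℝ} (hk : 0 < k) :
    ∫ t in Ioi 0, (k / t ^ 2) • g (k / t) = ∫ t in Ioi 0, g t := by
  have hderiv : ∀ t ∈ Ioi (0 : ℝ), HasDerivWithinAt (k / ·) (-k / t ^ 2) (Ioi 0) t :=
    fun t ht => by
      simpa [div_eq_mul_inv, neg_div] using
        ((hasDerivAt_inv (ne_of_gt ht)).const_mul k).hasDerivWithinAt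
  have hinj : InjOn (k / · : ℝ → ℝ) (Ioi 0) := fun s _ t _ h => by
    simpa only [div_div_cancel₀ hk.ne'] using congrArg (k / ·) h
  have himage : (k / · : ℝ → ℝ) '' Ioi 0 = Ioi 0 :=
    Subset.antisymm (image_subset_iff.2 fun t ht => div_pos hk ht) fun t ht =>
      ⟨k / t, div_pos hk ht, div_div_cancel₀ hk.ne'⟩
  conv_rhs =>
    rw [← himage, integral_image_eq_integral_abs_deriv_smul measurableSet_Ioi hderiv hinj]
  refine setIntegral_congr_fun measurableSet_Ioi fun t ht => ?_
  rw [neg_div, abs_neg, abs_of_pos (div_pos hk (pow_pos ht 2))]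

end Inversion

section SubConstDiv

variable {k : ℝ}

theorem strictMonoOn_sub_const_div (hk : 0 ≤ k) : StrictMonoOn (fun t : ℝ => t - k / t) (Ioi 0) :=
  fun s hs t _ hst => by
    have := div_le_div_of_nonneg_left hk hs hst.le
    dsimp only
    linarith

theorem image_sub_const_div_Ioi (hk : 0 < k) : (fun t : ℝ => t - k / t) '' Ioi 0 = univ := by
  refine eq_univ_of_forall fun y => ?_
  -- the positive root of `t ^ 2 - y * t - k = 0`
  set r := √(y ^ 2 + 4 * k)
  have hr : r ^ 2 = y ^ 2 + 4 * k := sq_sqrt (by positivity)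
  have hyr : |y| < r := by
    rw [← sqrt_sq_eq_abs]; exact sqrt_lt_sqrt (sq_nonneg y) (by linarith)
  have ht : 0 < (y + r) / 2 := by linarith [neg_abs_le y]
  refine ⟨(y + r) / 2, ht, ?_⟩
  have : y + r ≠ 0 := by linarith
  field_simp
  linear_combination hr

theorem hasDerivAt_sub_const_div {t : ℝ} (ht : t ≠ 0) :
    HasDerivAt (fun t : ℝ => t - k / t) (1 + k / t ^ 2) t := by
  have := (hasDerivAt_id' t).sub ((hasDerivAt_inv ht).const_mul k)
  simp only [← div_eq_mul_inv] at this
  exact this.congr_deriv (by ring)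

theorem integral_exp_neg_sq_sub_div_Ioi (hk : 0 < k) :
    ∫ t in Ioi 0, exp (-(t - k / t) ^ 2) = √π / 2 := by
  set f : ℝ → ℝ := fun t => exp (-(t - k / t) ^ 2)
  have hderiv : ∀ t ∈ Ioi (0 : ℝ),
      HasDerivWithinAt (fun t => t - k / t) (1 + k / t ^ 2) (Ioi 0) t :=
    fun t ht => (hasDerivAt_sub_const_div (ne_of_gt ht)).hasDerivWithinAt
  have hinj := (strictMonoOn_sub_const_div hk.le).injOn
  have hjac : ∀ t ∈ Ioi (0 : ℝ), |1 + k / t ^ 2| • exp (-(t - k / t) ^ 2) = (1 + k / t ^ 2) * f t :=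
    fun t _ => by rw [abs_of_pos (by positivity), smul_eq_mul]
  have hgauss : ∫ u, exp (-u ^ 2) = √π := by simpa using integral_gaussian 1
  have hsum : ∫ t in Ioi 0, (1 + k / t ^ 2) * f t = √π :=
    calc ∫ t in Ioi 0, (1 + k / t ^ 2) * f t
        = ∫ t in Ioi 0, |1 + k / t ^ 2| • exp (-(t - k / t) ^ 2) :=
          (setIntegral_congr_fun measurableSet_Ioi hjac).symm
      _ = ∫ u in (fun t => t - k / t) '' Ioi 0, exp (-u ^ 2) :=
          (integral_image_eq_integral_abs_deriv_smul measurableSet_Ioi hderiv hinj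
            (fun u => exp (-u ^ 2))).symm
      _ = √π := by rw [image_sub_const_div_Ioi hk, setIntegral_univ, hgauss]
  have hsum_int : IntegrableOn (fun t => (1 + k / t ^ 2) * f t) (Ioi 0) := by
    refine IntegrableOn.congr_fun ?_ hjac measurableSet_Ioi
    refine (integrableOn_image_iff_integrableOn_abs_deriv_smul measurableSet_Ioi hderiv hinj
      (fun u => exp (-u ^ 2))).1 ?_
    rw [image_sub_const_div_Ioi hk, integrableOn_univ]
    simpa using integrable_exp_neg_mul_sq one_pos
  have hf_int : IntegrableOn f (Ioi 0) := by
    refine hsum_int.mono' (by fun_prop) (ae_restrict_of_forall_mem measurableSet_Ioi fun t _ => ?_)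
    rw [norm_of_nonneg (exp_pos _).le]
    exact le_mul_of_one_le_left (exp_pos _).le (le_add_of_nonneg_right (by positivity))
  have hsym : ∫ t in Ioi 0, k / t ^ 2 * f t = ∫ t in Ioi 0, f t := by
    rw [← integral_comp_const_div_Ioi f hk]
    refine setIntegral_congr_fun measurableSet_Ioi fun t ht => ?_
    simp only [f, smul_eq_mul, div_div_cancel₀ hk.ne', ← neg_sub t, neg_sq]
  have hkf_int : IntegrableOn (fun t => k / t ^ 2 * f t) (Ioi 0) :=
    (hsum_int.sub hf_int).congr_fun (fun t _ => by simp only [Pi.sub_apply]; ring) measurableSet_Ioi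
  have hsplit : ∫ t in Ioi 0, (1 + k / t ^ 2) * f t =
      (∫ t in Ioi 0, f t) + ∫ t in Ioi 0, k / t ^ 2 * f t := by
    rw [← integral_add hf_int hkf_int]
    exact setIntegral_congr_fun measurableSet_Ioi fun t _ => by ring
  linarith

end SubConstDiv

theorem integral_exp_neg_mul_sq_sub_div_sq_Ioi {p q : ℝ} (hp : 0 ≤ p) (hq : 0 < q) :
    ∫ t in Ioi 0, exp (-q * t ^ 2 - p / t ^ 2) = √(π / q) / 2 * exp (-2 * √(p * q)) := by
  rcases hp.eq_or_lt with rfl | hp_pos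
  · simp only [zero_div, sub_zero, zero_mul, sqrt_zero, mul_zero, exp_zero, mul_one]
    exact integral_gaussian_Ioi q
  set k := √(p * q)
  have hs : 0 < √q := sqrt_pos.2 hq
  have hk : 0 < k := sqrt_pos.2 (mul_pos hp_pos hq)
  have hsquare : ∀ t ∈ Ioi (0 : ℝ),
      exp (-q * t ^ 2 - p / t ^ 2) = exp (-2 * k) * exp (-(√q * t - k / (√q * t)) ^ 2) := by
    intro t ht
    have hs2 : √q ^ 2 = q := sq_sqrt hq.le
    have hk2 : k ^ 2 = p * q := sq_sqrt (mul_pos hp_pos hq).le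
    have ht0 : t ≠ 0 := ne_of_gt ht
    rw [← exp_add]
    congr 1
    field_simp
    linear_combination (t ^ 4 * √q ^ 2 - p) * hs2 + hk2
  rw [setIntegral_congr_fun measurableSet_Ioi hsquare, integral_const_mul,
    integral_comp_mul_left_Ioi (fun u => exp (-(u - k / u) ^ 2)) 0 hs, mul_zero,
    integral_exp_neg_sq_sub_div_Ioi hk, sqrt_div' _ hq.le, smul_eq_mul]
  field_simp

/-- Gaussian scale mixture over a Rayleigh scale gives a Laplace marginal:
for all `x ∈ ℝ` and `b > 0`,
`∫₀^∞ (1/√(2πσ²)) e^{−x²/(2σ²)} · (σ/b²) e^{−σ²/(2b²)} dσ = (1/(2b)) e^{−|x|/b}`. -/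
theorem rayleigh_gaussian_mixture_is_laplace (b : ℝ) (hb : 0 < b) (x : ℝ) :
    (∫ σ in Set.Ioi (0:ℝ),
        (1 / Real.sqrt (2 * Real.pi * σ^2)) * Real.exp (-x^2 / (2 * σ^2)) *
          ((σ / b^2) * Real.exp (-σ^2 / (2 * b^2)))) =
      (1 / (2 * b)) * Real.exp (-|x| / b) := by
  have hmix : ∀ σ ∈ Ioi (0 : ℝ),
      1 / √(2 * π * σ ^ 2) * exp (-x ^ 2 / (2 * σ ^ 2)) * (σ / b ^ 2 * exp (-σ ^ 2 / (2 * b ^ 2))) =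
        1 / (√(2 * π) * b ^ 2) * exp (-(1 / (2 * b ^ 2)) * σ ^ 2 - x ^ 2 / 2 / σ ^ 2) := by
    intro σ hσ
    have hσ0 : σ ≠ 0 := ne_of_gt hσ
    rw [sqrt_mul' _ (sq_nonneg σ), sqrt_sq hσ.le, sub_eq_add_neg, exp_add]
    field_simp
  have hscale : √(π / (1 / (2 * b ^ 2))) = √(2 * π) * b := by
    rw [show π / (1 / (2 * b ^ 2)) = 2 * π * b ^ 2 by field_simp, sqrt_mul' _ (sq_nonneg b),
      sqrt_sq hb.le]
  have hrate : -2 * √(x ^ 2 / 2 * (1 / (2 * b ^ 2))) = -|x| / b := by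
    rw [show x ^ 2 / 2 * (1 / (2 * b ^ 2)) = (|x| / (2 * b)) ^ 2 by rw [div_pow, sq_abs]; ring,
      sqrt_sq (by positivity)]
    field_simp
  rw [setIntegral_congr_fun measurableSet_Ioi hmix, integral_const_mul,
    integral_exp_neg_mul_sq_sub_div_sq_Ioi (by positivity) (by positivity), hscale, hrate]
  field_simp
end

section
/- For any x ∈ ℝ and b > 0, ∫₀^∞ (σ/b²)·(1/(σ√(2π))) exp(−x²/(2σ²) − σ²/(2b²)) dσ = (1/(2b)) exp(−|x|/b). -/
open Real MeasureTheory

open Set in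
lemma glasser_J (a : ℝ) (ha : 0 < a) :
    ∫ t in Set.Ioi (0:ℝ), Real.exp (-(t - a/t)^2) = Real.sqrt Real.pi / 2 := by
  set φ : ℝ → ℝ := fun t => t - a/t with hφdef
  have hφ' : ∀ t ∈ Set.Ioi (0:ℝ), HasDerivWithinAt φ (1 + a/t^2) (Set.Ioi 0) t := by
    intro t ht
    have ht' : t ≠ 0 := ne_of_gt ht
    have h1 : HasDerivAt (fun t : ℝ => t - a * t⁻¹) (1 - a * (-(t^2)⁻¹)) t :=
      (hasDerivAt_id t).sub ((hasDerivAt_inv ht').const_mul a)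
    have h2 : HasDerivAt φ (1 - a * (-(t^2)⁻¹)) t := by
      simpa [hφdef, div_eq_mul_inv] using h1
    have : (1 : ℝ) - a * (-(t^2)⁻¹) = 1 + a/t^2 := by field_simp; ring
    exact (this ▸ h2).hasDerivWithinAt
  have hinj : Set.InjOn φ (Set.Ioi 0) := by
    intro s hs t ht h
    have hs' : (0:ℝ) < s := hs
    have ht' : (0:ℝ) < t := ht
    simp only [hφdef] at h
    have h2 : (s - t) * (s * t + a) = 0 := by
      field_simp at h
      nlinarith [h]
    have h3 : s * t + a > 0 := by positivity
    rcases mul_eq_zero.mp h2 with h4 | h4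
    · linarith
    · linarith
  have himg : φ '' (Set.Ioi 0) = Set.univ := by
    apply Set.eq_univ_of_forall
    intro y
    have hs4 : (0:ℝ) ≤ y^2 + 4*a := by positivity
    have hsq := Real.sq_sqrt hs4
    have habs : |y| < Real.sqrt (y^2 + 4*a) := by
      rw [← Real.sqrt_sq_eq_abs]
      exact Real.sqrt_lt_sqrt (sq_nonneg y) (by linarith)
    have hy : -y < Real.sqrt (y^2 + 4*a) := lt_of_le_of_lt (neg_le_abs y) habs
    set t := (y + Real.sqrt (y^2 + 4*a))/2 with htdef
    have htpos : 0 < t := by rw [htdef]; linarith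
    refine ⟨t, htpos, ?_⟩
    simp only [hφdef]
    have key : t^2 - a = y*t := by rw [htdef]; linear_combination hsq/4
    field_simp
    linear_combination key
  have hg : Integrable (fun u : ℝ => Real.exp (-u^2)) := by
    simpa using integrable_exp_neg_mul_sq (one_pos (α := ℝ))
  have hIntAll : IntegrableOn (fun t => |1 + a/t^2| • Real.exp (-(φ t)^2)) (Set.Ioi 0) := by
    have hh := integrableOn_image_iff_integrableOn_abs_deriv_smul measurableSet_Ioi hφ' hinj
      (fun u => Real.exp (-u^2))
    rw [himg] at hh
    exact hh.mp hg.integrableOn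
  have h1 : Real.sqrt Real.pi = ∫ t in Set.Ioi (0:ℝ), |1 + a/t^2| • Real.exp (-(φ t)^2) := by
    have hh := integral_image_eq_integral_abs_deriv_smul measurableSet_Ioi hφ' hinj
      (fun u => Real.exp (-u^2))
    rw [himg, Measure.restrict_univ] at hh
    rw [← hh]
    symm
    simpa using integral_gaussian 1
  have hψ' : ∀ t ∈ Set.Ioi (0:ℝ), HasDerivWithinAt (fun t => a/t) (-(a/t^2)) (Set.Ioi 0) t := by
    intro t ht
    have ht' : t ≠ 0 := ne_of_gt ht
    have hd : HasDerivAt (fun t : ℝ => a / t) (a * (-(t^2)⁻¹)) t := by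
      simpa [div_eq_mul_inv] using (hasDerivAt_inv ht').const_mul a
    have he : a * (-(t^2)⁻¹) = -(a/t^2) := by field_simp
    exact (he ▸ hd).hasDerivWithinAt
  have hψinj : Set.InjOn (fun t => a/t) (Set.Ioi 0) := by
    intro s hs t ht h
    have hs' : (0:ℝ) < s := hs
    have ht' : (0:ℝ) < t := ht
    field_simp at h
    linarith
  have hψimg : (fun t => a/t) '' (Set.Ioi 0) = Set.Ioi 0 := by
    ext y
    constructor
    · rintro ⟨t, ht, rfl⟩
      have : (0:ℝ) < t := ht
      exact Set.mem_Ioi.mpr (by positivity)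
    · intro hy
      have hy' : (0:ℝ) < y := hy
      exact ⟨a/y, Set.mem_Ioi.mpr (by positivity), by field_simp⟩
  have h2 : (∫ t in Set.Ioi (0:ℝ), Real.exp (-(φ t)^2))
      = ∫ t in Set.Ioi (0:ℝ), |(-(a/t^2))| • Real.exp (-((a/t) - a/(a/t))^2) := by
    have := integral_image_eq_integral_abs_deriv_smul measurableSet_Ioi hψ' hψinj
      (fun u => Real.exp (-(u - a/u)^2))
    rw [hψimg] at this
    simpa only [hφdef] using this
  have h3 : (∫ t in Set.Ioi (0:ℝ), |(-(a/t^2))| • Real.exp (-((a/t) - a/(a/t))^2))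
      = ∫ t in Set.Ioi (0:ℝ), (a/t^2) * Real.exp (-(φ t)^2) := by
    apply setIntegral_congr_fun measurableSet_Ioi
    intro t ht
    have ht' : (0:ℝ) < t := ht
    have hrw : a/(a/t) = t := by field_simp
    show |(-(a/t^2))| • Real.exp (-((a/t) - a/(a/t))^2) = (a/t^2) * Real.exp (-(φ t)^2)
    rw [hrw, abs_neg, abs_of_pos (by positivity : (0:ℝ) < a/t^2)]
    have hsq2 : (a/t - t)^2 = (t - a/t)^2 := by ring
    simp only [smul_eq_mul, hφdef, hsq2]
  have hmeas : Measurable (fun t : ℝ => Real.exp (-(t - a/t)^2)) :=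
    Real.measurable_exp.comp
      (((measurable_id.sub (measurable_const.div measurable_id)).pow_const 2).neg)
  have hbig : ∀ᵐ t ∂(volume.restrict (Set.Ioi (0:ℝ))), (0:ℝ) < t := by
    rw [MeasureTheory.ae_restrict_iff' measurableSet_Ioi]
    exact Filter.Eventually.of_forall (fun t ht => ht)
  have hIg : IntegrableOn (fun t => Real.exp (-(φ t)^2)) (Set.Ioi 0) := by
    apply MeasureTheory.Integrable.mono hIntAll
      (by simpa only [hφdef] using hmeas.aestronglyMeasurable)
    filter_upwards [hbig] with t ht
    have h1t : (1:ℝ) ≤ |1 + a/t^2| := by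
      rw [abs_of_pos (by positivity)]
      have : (0:ℝ) ≤ a/t^2 := by positivity
      linarith
    simp only [smul_eq_mul, norm_mul, Real.norm_eq_abs, abs_abs]
    nlinarith [Real.exp_pos (-(φ t)^2), abs_nonneg (Real.exp (-(φ t)^2)),
      abs_of_pos (Real.exp_pos (-(φ t)^2))]
  have hIh : IntegrableOn (fun t => (a/t^2) * Real.exp (-(φ t)^2)) (Set.Ioi 0) := by
    apply MeasureTheory.Integrable.mono hIntAll
    · apply Measurable.aestronglyMeasurable
      exact (measurable_const.div (measurable_id.pow_const 2)).mul
        (by simpa only [hφdef] using hmeas)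
    filter_upwards [hbig] with t ht
    have h1t : a/t^2 ≤ |1 + a/t^2| := by
      rw [abs_of_pos (by positivity)]
      linarith
    have hep := Real.exp_pos (-(φ t)^2)
    simp only [smul_eq_mul, norm_mul, Real.norm_eq_abs]
    rw [abs_of_pos hep, abs_of_pos (by positivity : (0:ℝ) < a/t^2), abs_abs]
    exact mul_le_mul_of_nonneg_right h1t hep.le
  have hsplit : (∫ t in Set.Ioi (0:ℝ), |1 + a/t^2| • Real.exp (-(φ t)^2))
      = (∫ t in Set.Ioi (0:ℝ), Real.exp (-(φ t)^2))
        + ∫ t in Set.Ioi (0:ℝ), (a/t^2) * Real.exp (-(φ t)^2) := by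
    rw [← integral_add hIg hIh]
    apply setIntegral_congr_fun measurableSet_Ioi
    intro t ht
    have ht' : (0:ℝ) < t := ht
    show |1 + a/t^2| • Real.exp (-(φ t)^2)
      = Real.exp (-(φ t)^2) + (a/t^2) * Real.exp (-(φ t)^2)
    rw [abs_of_pos (by positivity : (0:ℝ) < 1 + a/t^2)]
    simp only [smul_eq_mul]
    ring
  have hfin : Real.sqrt Real.pi = 2 * ∫ t in Set.Ioi (0:ℝ), Real.exp (-(φ t)^2) := by
    rw [h1, hsplit, ← h3, ← h2]
    ring
  simp only [hφdef] at hfin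
  linarith

lemma glasser (a : ℝ) (ha : 0 < a) :
    ∫ t in Set.Ioi (0:ℝ), Real.exp (-a^2/t^2 - t^2)
      = Real.exp (-2*a) * (Real.sqrt Real.pi / 2) := by
  rw [← glasser_J a ha, ← MeasureTheory.integral_const_mul]
  apply setIntegral_congr_fun measurableSet_Ioi
  intro t ht
  have ht' : (0:ℝ) < t := ht
  show Real.exp (-a^2/t^2 - t^2) = Real.exp (-2*a) * Real.exp (-(t - a/t)^2)
  rw [← Real.exp_add]
  congr 1
  field_simp
  ring

/-- Key integral identity for the Rayleigh-mixed Gaussian representation of the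
Laplace distribution:
`∫₀^∞ (1/(b²√(2π))) exp(−x²/(2σ²) − σ²/(2b²)) dσ = (1/(2b)) exp(−|x|/b)`. -/
theorem laplace_scale_mixture_integral (b : ℝ) (hb : 0 < b) (x : ℝ) :
    (∫ σ in Set.Ioi (0:ℝ),
        (1 / (b^2 * Real.sqrt (2 * Real.pi))) *
          Real.exp (-x^2 / (2 * σ^2) - σ^2 / (2 * b^2))) =
      (1 / (2 * b)) * Real.exp (-|x| / b) := by
  have hπ : (0:ℝ) < Real.sqrt (2 * Real.pi) := Real.sqrt_pos.mpr (by positivity)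
  rw [MeasureTheory.integral_const_mul]
  rcases eq_or_ne x 0 with rfl | hx
  · have hrw : ∀ σ : ℝ, -(0:ℝ)^2/(2*σ^2) - σ^2/(2*b^2) = -(1/(2*b^2)) * σ^2 := by
      intro σ
      rw [show -(0:ℝ)^2 = 0 by norm_num, zero_div]
      ring
    simp only [hrw]
    rw [integral_gaussian_Ioi (1/(2*b^2))]
    have h1 : Real.pi / (1/(2*b^2)) = (2*Real.pi) * b^2 := by field_simp
    rw [h1, Real.sqrt_mul (by positivity) (b^2), Real.sqrt_sq hb.le]
    simp only [abs_zero, zero_div, neg_zero, Real.exp_zero]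
    field_simp
  · set a := |x| / (2*b) with hadef
    have ha : 0 < a := by
      rw [hadef]
      have := abs_pos.mpr hx
      positivity
    have hc : (0:ℝ) < b * Real.sqrt 2 := by positivity
    have hsub := integral_comp_mul_left_Ioi
      (fun σ => Real.exp (-x^2 / (2*σ^2) - σ^2/(2*b^2))) 0 hc
    rw [mul_zero] at hsub
    have hcsq : (b * Real.sqrt 2)^2 = 2 * b^2 := by
      rw [mul_pow, Real.sq_sqrt (by norm_num : (2:ℝ) ≥ 0)]
      ring
    have hgc : (∫ t in Set.Ioi (0:ℝ),
        Real.exp (-x^2 / (2*((b*Real.sqrt 2)*t)^2) - ((b*Real.sqrt 2)*t)^2/(2*b^2)))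
        = ∫ t in Set.Ioi (0:ℝ), Real.exp (-a^2/t^2 - t^2) := by
      apply setIntegral_congr_fun measurableSet_Ioi
      intro t ht
      have ht' : (0:ℝ) < t := ht
      have ha2 : a^2 = x^2/(4*b^2) := by
        rw [hadef, div_pow, sq_abs]
        congr 1
        ring
      show Real.exp (-x^2 / (2*((b*Real.sqrt 2)*t)^2) - ((b*Real.sqrt 2)*t)^2/(2*b^2))
        = Real.exp (-a^2/t^2 - t^2)
      congr 1
      rw [mul_pow, hcsq, ha2]
      field_simp
      ring
    rw [hgc, glasser a ha] at hsub
    have hval : (∫ σ in Set.Ioi (0:ℝ), Real.exp (-x^2/(2*σ^2) - σ^2/(2*b^2)))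
        = (b*Real.sqrt 2) * (Real.exp (-2*a) * (Real.sqrt Real.pi/2)) := by
      rw [hsub, smul_eq_mul, ← mul_assoc, mul_inv_cancel₀ (ne_of_gt hc), one_mul]
    rw [hval]
    have h2a : Real.exp (-(2*a)) = Real.exp (-|x|/b) := by
      congr 1
      rw [hadef]
      field_simp
    rw [show (-2*a : ℝ) = -(2*a) by ring, h2a]
    have hs2π : Real.sqrt (2*Real.pi) = Real.sqrt 2 * Real.sqrt Real.pi :=
      Real.sqrt_mul (by norm_num) _
    have hsπ : (0:ℝ) < Real.sqrt Real.pi := Real.sqrt_pos.mpr Real.pi_pos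
    have hs2 : (0:ℝ) < Real.sqrt 2 := by positivity
    rw [hs2π]
    field_simp
end
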